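/- With b₀(v), b₁(v) defined by the trigonometric fitting equations (2b₀(v) + b₁(v) = 1 and 2(cos v − 1) = −v²(2b₀(v)cos v + b₁(v))), the limit as v → 0 exists and equals (b₀, b₁) = (1/12, 5/6), the classical coefficients. -/

import Mathlib

/-!
Eliminating `b₁ = 1 - 2 b₀` gives `b₀ v = (v² - 2 (1 - cos v)) / (2 v² (1 - cos v))`. After
dividing numerator and denominator by `v⁴`, the two quotients tend to `1/12` and `1`, by repeated
l'Hôpital against powers of `v`; then `b₁ → 1 - 2/12 = 5/6`.
-/

open Filter Topology Real

lemma tendsto_div_pow_succ_of_hasDerivAt {f f' : ℝ → ℝ} {L : ℝ} {n : ℕ}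
    (hf : ∀ x, HasDerivAt f (f' x) x) (hf0 : f 0 = 0)
    (h : Tendsto (fun x => f' x / x ^ n) (𝓝[≠] 0) (𝓝 L)) :
    Tendsto (fun x => f x / x ^ (n + 1)) (𝓝[≠] 0) (𝓝 (L / (n + 1))) := by
  refine HasDerivAt.lhopital_zero_nhdsNE (f' := f') (g' := fun x => (n + 1) * x ^ n)
    (.of_forall hf) (.of_forall fun x => ?_) ?_ ?_ ?_ ?_
  · simpa [mul_comm] using hasDerivAt_pow (n + 1) x
  · filter_upwards [self_mem_nhdsWithin] with x hx
    have : x ≠ 0 := hx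
    positivity
  · simpa [hf0] using ((hf 0).continuousAt.tendsto).mono_left nhdsWithin_le_nhds
  · simpa using
      ((continuous_pow (n + 1)).tendsto' (0 : ℝ) 0 (by simp)).mono_left nhdsWithin_le_nhds
  · simpa [div_mul_eq_div_div_swap] using h.div_const ((n : ℝ) + 1)

lemma tendsto_sin_div_self : Tendsto (fun x => sin x / x) (𝓝[≠] 0) (𝓝 1) := by
  simpa [div_eq_inv_mul] using (hasDerivAt_sin 0).tendsto_slope_zero

lemma tendsto_one_sub_cos_div_sq :
    Tendsto (fun x => (1 - cos x) / x ^ 2) (𝓝[≠] 0) (𝓝 (1 / 2)) := by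
  have := tendsto_div_pow_succ_of_hasDerivAt (n := 1) (f := fun x => 1 - cos x)
    (fun x => by simpa using (hasDerivAt_cos x).const_sub 1) (by simp)
    (by simpa using tendsto_sin_div_self)
  norm_num at this
  exact this

lemma tendsto_sq_sub_two_mul_one_sub_cos_div_pow_four :
    Tendsto (fun x => (x ^ 2 - 2 * (1 - cos x)) / x ^ 4) (𝓝[≠] 0) (𝓝 (1 / 12)) := by
  have h₂ : Tendsto (fun x => 2 * (1 - cos x) / x ^ 2) (𝓝[≠] 0) (𝓝 1) := by
    simpa [mul_div_assoc] using tendsto_one_sub_cos_div_sq.const_mul 2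
  have h₃ := tendsto_div_pow_succ_of_hasDerivAt (n := 2) (f := fun x => 2 * x - 2 * sin x)
    (fun x => (((hasDerivAt_id x).const_mul 2).sub ((hasDerivAt_sin x).const_mul 2)).congr_deriv
      (by simp; ring))
    (by simp) h₂
  have h₄ := tendsto_div_pow_succ_of_hasDerivAt (n := 3) (f := fun x => x ^ 2 - 2 * (1 - cos x))
    (fun x => ((hasDerivAt_pow 2 x).sub ((hasDerivAt_cos x).const_sub 1 |>.const_mul 2)).congr_deriv
      (by simp))
    (by simp) h₃
  norm_num at h₄
  exact h₄

lemma b₀_eq_of_fitting_equations {v c b₀ b₁ : ℝ} (hv : v ≠ 0) (hc : 1 - c ≠ 0)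
    (hfit : 2 * (c - 1) = -v ^ 2 * (2 * b₀ * c + b₁)) (horder : 2 * b₀ + b₁ = 1) :
    b₀ = ((v ^ 2 - 2 * (1 - c)) / v ^ 4) / (2 * ((1 - c) / v ^ 2)) := by
  field_simp
  linear_combination -hfit + v ^ 2 * horder

/-- Theorem 2 instance: the trigonometrically fitted coefficients tend to the
classical coefficients `(1/12, 5/6)` as the fitted frequency tends to zero. -/
theorem trig_fitted_tends_to_classical (b₀ b₁ : ℝ → ℝ)
    (hfit : ∀ v : ℝ, v ≠ 0 →
      2 * (Real.cos v - 1) = -v ^ 2 * (2 * b₀ v * Real.cos v + b₁ v))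
    (horder : ∀ v : ℝ, v ≠ 0 → 2 * b₀ v + b₁ v = 1) :
    Tendsto (fun v : ℝ => (b₀ v, b₁ v)) (nhdsWithin 0 {v : ℝ | v ≠ 0})
      (nhds ((1 : ℝ) / 12, (5 : ℝ) / 6)) := by
  have hcos := tendsto_one_sub_cos_div_sq
  have hb₀ : Tendsto b₀ (𝓝[≠] 0) (𝓝 (1 / 12)) := by
    have hlim := tendsto_sq_sub_two_mul_one_sub_cos_div_pow_four.div (hcos.const_mul 2)
      (by norm_num)
    norm_num at hlim
    refine hlim.congr' ?_
    filter_upwards [self_mem_nhdsWithin, hcos.eventually_ne one_half_pos.ne'] with v hv hc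
    exact (b₀_eq_of_fitting_equations hv (div_ne_zero_iff.mp hc).1 (hfit v hv) (horder v hv)).symm
  have hb₁ : Tendsto b₁ (𝓝[≠] 0) (𝓝 (5 / 6)) := by
    have hlim := (hb₀.const_mul 2).const_sub 1
    norm_num at hlim
    refine hlim.congr' ?_
    filter_upwards [self_mem_nhdsWithin] with v hv
    linarith [horder v hv]
  exact hb₀.prodMk_nhds hb₁
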